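/- Let 2 ≤ q < ∞ and let Z be a Banach space which is uniformly convex of power type q with constant δ ∈ (0,1]. Let Y ⊆ Z be a closed subspace, let Q : Z → Z be a linear contraction whose range is contained in Y and which satisfies Qy = y for all y ∈ Y (a contractive projection onto Y), and let P : Z → Z be a linear contractive projection (P² = P and ‖P‖ ≤ 1). Define T : Y → Y by Ty = Q(Py). Then ‖I_Y − T‖ ≤ 2 − ε, where ε := (2δ/(1+2δ))·(1/q). -/

import Mathlib

/-- A normed space is uniformly convex of power type `q` with constant `δ` if
`‖(x+y)/2‖^q + δ ‖(x-y)/2‖^q ≤ (‖x‖^q + ‖y‖^q)/2` for all `x, y`. -/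
def UniformlyConvexPow (Z : Type*) [NormedAddCommGroup Z] [NormedSpace ℝ Z]
    (q δ : ℝ) : Prop :=
  ∀ x y : Z, ‖(2 : ℝ)⁻¹ • (x + y)‖ ^ q + δ * ‖(2 : ℝ)⁻¹ • (x - y)‖ ^ q ≤
    (‖x‖ ^ q + ‖y‖ ^ q) / 2

/-! Write `c = ‖z‖`, `b = ‖P z‖` and `a = ‖z - P z‖`. Uniform convexity at `z` and `-P z`,
together with `‖(z + P z)/2‖ ≥ ‖P ((z + P z)/2)‖ = b`, gives `(a/2)^q + δ b^q ≤ c^q`, while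
`a ≤ c + b`. If `a` were close to `2c`, then `b` would be close to `c` and the left-hand side would
exceed `c^q`; Bernoulli's inequality makes this quantitative, giving `a ≤ (2 - ε) c`. Since
`Q` is a contraction fixing `Y`, `(I - T) y = Q (y - P y)` has norm at most `a`. -/

open Real

noncomputable def contractionGap (q δ : ℝ) : ℝ := 2 * δ / (1 + 2 * δ) * (1 / q)

section contractionGap

variable {q δ : ℝ}

lemma contractionGap_nonneg (hq : 0 ≤ q) (hδ : 0 ≤ δ) : 0 ≤ contractionGap q δ := by
  unfold contractionGap; positivity

lemma contractionGap_lt_one (hq : 1 ≤ q) (hδ : 0 ≤ δ) : contractionGap q δ < 1 := by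
  have hfrac : 2 * δ / (1 + 2 * δ) < 1 := by rw [div_lt_one (by linarith)]; linarith
  calc contractionGap q δ ≤ 2 * δ / (1 + 2 * δ) * 1 := by
        unfold contractionGap
        gcongr
        exact div_le_one_of_le₀ hq (by linarith)
    _ < 1 := by linarith

lemma mul_contractionGap (hq : q ≠ 0) : q * contractionGap q δ = 2 * δ / (1 + 2 * δ) := by
  unfold contractionGap; field_simp

lemma one_sub_mul_le_one_sub_rpow {t : ℝ} (hq : 1 ≤ q) (ht : t ≤ 1) :
    1 - q * t ≤ (1 - t) ^ q := by
  simpa [sub_eq_add_neg] using one_add_mul_self_le_rpow_one_add (s := -t) (by linarith) hq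

/-- The value of `contractionGap q δ` is exactly what makes the two Bernoulli lower bounds sum to `1`. -/
lemma one_le_one_sub_half_contractionGap_rpow_add (hq : 1 ≤ q) (hδ : 0 ≤ δ) :
    1 ≤ (1 - contractionGap q δ / 2) ^ q + δ * (1 - contractionGap q δ) ^ q := by
  set ε := contractionGap q δ
  have hε0 : 0 ≤ ε := contractionGap_nonneg (by linarith) hδ
  have hε1 : ε < 1 := contractionGap_lt_one hq hδ
  have hhalf := one_sub_mul_le_one_sub_rpow (t := ε / 2) hq (by linarith)
  have hfull := one_sub_mul_le_one_sub_rpow (t := ε) hq hε1.le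
  have hqε : q * ε * (1 + 2 * δ) = 2 * δ := by
    rw [mul_contractionGap (by linarith)]; field_simp
  nlinarith [mul_le_mul_of_nonneg_left hfull hδ]

lemma le_two_sub_contractionGap_mul {a b c : ℝ} (hq : 1 ≤ q) (hδ : 0 ≤ δ) (hc : 0 ≤ c)
    (hconv : (a / 2) ^ q + δ * b ^ q ≤ c ^ q) (htri : a ≤ c + b) :
    a ≤ (2 - contractionGap q δ) * c := by
  set ε := contractionGap q δ
  have hε0 : 0 ≤ ε := contractionGap_nonneg (by linarith) hδ
  have hε1 : ε < 1 := contractionGap_lt_one hq hδ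
  by_contra! hlarge
  have hhalf : ((1 - ε / 2) * c) ^ q < (a / 2) ^ q :=
    rpow_lt_rpow (by nlinarith) (by linarith) (by linarith)
  have hfull : ((1 - ε) * c) ^ q ≤ b ^ q :=
    rpow_le_rpow (by nlinarith) (by linarith) (by linarith)
  rw [mul_rpow (by linarith) hc] at hhalf
  rw [mul_rpow (by linarith) hc] at hfull
  have hcq : 0 ≤ c ^ q := rpow_nonneg hc q
  nlinarith [mul_le_mul_of_nonneg_right (one_le_one_sub_half_contractionGap_rpow_add hq hδ) hcq,
    mul_le_mul_of_nonneg_left hfull hδ]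

end contractionGap

section projection

variable {Z : Type*} [NormedAddCommGroup Z] [NormedSpace ℝ Z] {q δ : ℝ}

lemma UniformlyConvexPow.half_norm_sub_proj_rpow_add_le (hZ : UniformlyConvexPow Z q δ)
    (hq : 0 ≤ q) (hδ : 0 ≤ δ) {P : Z →L[ℝ] Z} (hP1 : ‖P‖ ≤ 1) (hPproj : P.comp P = P) (z : Z) :
    (‖z - P z‖ / 2) ^ q + δ * ‖P z‖ ^ q ≤ ‖z‖ ^ q := by
  have hPcontr : ∀ w, ‖P w‖ ≤ ‖w‖ := fun w => (P.le_of_opNorm_le hP1 w).trans_eq (one_mul _)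
  have hmid : P ((2 : ℝ)⁻¹ • (z + P z)) = P z := by
    rw [map_smul, map_add, ← P.comp_apply, hPproj]; module
  have hPz : ‖P z‖ ^ q ≤ ‖(2 : ℝ)⁻¹ • (z + P z)‖ ^ q := by
    gcongr
    calc ‖P z‖ = ‖P ((2 : ℝ)⁻¹ • (z + P z))‖ := by rw [hmid]
      _ ≤ _ := hPcontr _
  have hPzz : ‖P z‖ ^ q ≤ ‖z‖ ^ q := by gcongr; exact hPcontr z
  have hUC := hZ z (-P z)
  rw [← sub_eq_add_neg, sub_neg_eq_add, norm_neg, norm_smul, Real.norm_of_nonneg (by norm_num),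
    inv_mul_eq_div] at hUC
  nlinarith [mul_le_mul_of_nonneg_left hPz hδ]

lemma UniformlyConvexPow.norm_sub_proj_le (hZ : UniformlyConvexPow Z q δ) (hq : 1 ≤ q)
    (hδ : 0 ≤ δ) {P : Z →L[ℝ] Z} (hP1 : ‖P‖ ≤ 1) (hPproj : P.comp P = P) (z : Z) :
    ‖z - P z‖ ≤ (2 - contractionGap q δ) * ‖z‖ :=
  le_two_sub_contractionGap_mul hq hδ (norm_nonneg z)
    (hZ.half_norm_sub_proj_rpow_add_le (by linarith) hδ hP1 hPproj z) (norm_sub_le z (P z))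

end projection

theorem stmt8_general (Z : Type*) [NormedAddCommGroup Z] [NormedSpace ℝ Z]
    (q δ : ℝ) (hq : 2 ≤ q) (hδ : δ ∈ Set.Ioc (0 : ℝ) 1)
    (hZ : UniformlyConvexPow Z q δ)
    (Y : Submodule ℝ Z)
    (Q P : Z →L[ℝ] Z)
    (hQ1 : ‖Q‖ ≤ 1) (hQfix : ∀ y ∈ Y, Q y = y)
    (hP1 : ‖P‖ ≤ 1) (hPproj : P.comp P = P)
    (T : Y →L[ℝ] Y) (hT : ∀ y : Y, (T y : Z) = Q (P (y : Z))) :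
    ‖ContinuousLinearMap.id ℝ Y - T‖ ≤ 2 - 2 * δ / (1 + 2 * δ) * (1 / q) := by
  have hq1 : 1 ≤ q := by linarith
  have hδ0 : 0 ≤ δ := hδ.1.le
  change ‖_‖ ≤ 2 - contractionGap q δ
  refine ContinuousLinearMap.opNorm_le_bound _
    (by linarith [contractionGap_lt_one hq1 hδ0]) fun y => ?_
  have hIT : (((ContinuousLinearMap.id ℝ Y - T) y : Y) : Z) = Q ((y : Z) - P y) := by
    simp [hT, hQfix y y.2]
  calc ‖(ContinuousLinearMap.id ℝ Y - T) y‖ = ‖Q ((y : Z) - P y)‖ := by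
        rw [← Submodule.norm_coe, hIT]
    _ ≤ ‖(y : Z) - P y‖ := (Q.le_of_opNorm_le hQ1 _).trans_eq (one_mul _)
    _ ≤ (2 - contractionGap q δ) * ‖y‖ := hZ.norm_sub_proj_le hq1 hδ0 hP1 hPproj y

/-- Abstract form of the key contraction lemma: if `Z` is uniformly convex of
power type `q` with constant `δ ∈ (0,1]`, `Y ⊆ Z` is a closed subspace,
`Q` is a contractive projection of `Z` onto `Y`, `P` is a contractive projection
on `Z`, and `T : Y → Y` is `y ↦ Q (P y)`, then
`‖I_Y - T‖ ≤ 2 - ε` with `ε = (2δ/(1+2δ)) · (1/q)`. -/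
theorem stmt8 (Z : Type*) [NormedAddCommGroup Z] [NormedSpace ℝ Z] [CompleteSpace Z]
    (q δ : ℝ) (hq : 2 ≤ q) (hδ : δ ∈ Set.Ioc (0 : ℝ) 1)
    (hZ : UniformlyConvexPow Z q δ)
    (Y : Submodule ℝ Z) (hY : IsClosed (Y : Set Z))
    (Q P : Z →L[ℝ] Z)
    (hQ1 : ‖Q‖ ≤ 1) (hQran : ∀ z : Z, Q z ∈ Y) (hQfix : ∀ y ∈ Y, Q y = y)
    (hP1 : ‖P‖ ≤ 1) (hPproj : P.comp P = P)
    (T : Y →L[ℝ] Y) (hT : ∀ y : Y, (T y : Z) = Q (P (y : Z))) :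
    ‖ContinuousLinearMap.id ℝ Y - T‖ ≤ 2 - 2 * δ / (1 + 2 * δ) * (1 / q) :=
  stmt8_general Z q δ hq hδ hZ Y Q P hQ1 hQfix hP1 hPproj T hT
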